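/- Let X be a nonempty compact Hausdorff space, φ : X → X a homeomorphism, and y ∈ X a periodic point with φᵖ(y) = y, p ≥ 1. Then for every λ ∈ ℂ with |λ| = 1 and all f₀, …, f_N ∈ C(X, ℂ), the operator norms satisfy ‖Σ_{n=0}^{N} Sⁿ π_y(fₙ)‖ ≥ ‖Σ_{n=0}^{N} Π_{y,λ}(U)ⁿ Π_{y,λ}(fₙ)‖. -/

import Mathlib

open scoped ENNReal

section DiagOp

variable {I : Type*}

theorem diag_pointwise_bound {d : I → ℂ} {C : ℝ} (hC : ∀ i, ‖d i‖ ≤ C)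
    (z : I → ℂ) (i : I) :
    ‖d i * z i‖ ^ (2 : ℝ≥0∞).toReal ≤
      (max C 0) ^ (2 : ℝ≥0∞).toReal * ‖z i‖ ^ (2 : ℝ≥0∞).toReal := by
  calc ‖d i * z i‖ ^ (2 : ℝ≥0∞).toReal
      = (‖d i‖ * ‖z i‖) ^ (2 : ℝ≥0∞).toReal := by rw [norm_mul]
    _ ≤ (max C 0 * ‖z i‖) ^ (2 : ℝ≥0∞).toReal :=
        Real.rpow_le_rpow (by positivity)
          (mul_le_mul_of_nonneg_right ((hC i).trans (le_max_left _ _)) (norm_nonneg _))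
          (by norm_num)
    _ = _ := Real.mul_rpow (le_max_right C 0) (norm_nonneg _)

theorem memℓp_diag_mul {d : I → ℂ} {C : ℝ} (hC : ∀ i, ‖d i‖ ≤ C)
    (z : lp (fun _ : I => ℂ) 2) : Memℓp (fun i => d i * z i) 2 := by
  have h2 : (0 : ℝ) < (2 : ℝ≥0∞).toReal := by norm_num
  apply memℓp_gen
  have hs : Summable fun i => (max C 0) ^ (2 : ℝ≥0∞).toReal * ‖z i‖ ^ (2 : ℝ≥0∞).toReal :=
    ((lp.memℓp z).summable h2).mul_left _
  exact hs.of_nonneg_of_le (fun i => Real.rpow_nonneg (norm_nonneg _) _)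
    (fun i => diag_pointwise_bound hC (⇑z) i)

/-- The diagonal operator on `ℓ²(I, ℂ)` with diagonal entries `d i`, bounded by `C`. -/
noncomputable def diagOp (d : I → ℂ) (C : ℝ) (hC : ∀ i, ‖d i‖ ≤ C) :
    lp (fun _ : I => ℂ) 2 →L[ℂ] lp (fun _ : I => ℂ) 2 :=
  LinearMap.mkContinuous
    { toFun := fun z => (⟨fun i => d i * z i, memℓp_diag_mul hC z⟩ : lp (fun _ : I => ℂ) 2)
      map_add' := fun z w => Subtype.ext (funext fun i => mul_add (d i) (z i) (w i))
      map_smul' := fun c z => Subtype.ext (funext fun i => mul_left_comm (d i) c (z i)) }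
    (max C 0)
    (fun z => by
      have h2 : (0 : ℝ) < (2 : ℝ≥0∞).toReal := by norm_num
      apply lp.norm_le_of_tsum_le h2 (by positivity)
      calc (∑' i, ‖d i * z i‖ ^ (2 : ℝ≥0∞).toReal)
          ≤ ∑' i, (max C 0) ^ (2 : ℝ≥0∞).toReal * ‖z i‖ ^ (2 : ℝ≥0∞).toReal :=
            Summable.tsum_le_tsum (fun i => diag_pointwise_bound hC (⇑z) i)
              (((memℓp_diag_mul hC z).summable h2))
              (((lp.memℓp z).summable h2).mul_left _)
        _ = (max C 0) ^ (2 : ℝ≥0∞).toReal * ∑' i, ‖z i‖ ^ (2 : ℝ≥0∞).toReal :=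
            tsum_mul_left
        _ = (max C 0) ^ (2 : ℝ≥0∞).toReal * ‖z‖ ^ (2 : ℝ≥0∞).toReal := by
            rw [lp.norm_rpow_eq_tsum h2]
        _ = (max C 0 * ‖z‖) ^ (2 : ℝ≥0∞).toReal :=
            (Real.mul_rpow (by positivity) (norm_nonneg _)).symm)

@[simp] theorem diagOp_apply (d : I → ℂ) (C : ℝ) (hC : ∀ i, ‖d i‖ ≤ C)
    (z : lp (fun _ : I => ℂ) 2) (i : I) : diagOp d C hC z i = d i * z i := rfl

end DiagOp

section Shift

/-- The underlying sequence map of the unilateral shift: `(z₁, z₂, …) ↦ (0, z₁, z₂, …)`. -/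
def shiftSeq (z : ℕ → ℂ) : ℕ → ℂ
  | 0 => 0
  | n + 1 => z n

theorem memℓp_shiftSeq (z : lp (fun _ : ℕ => ℂ) 2) : Memℓp (shiftSeq ⇑z) 2 := by
  have h2 : (0 : ℝ) < (2 : ℝ≥0∞).toReal := by norm_num
  apply memℓp_gen
  exact (summable_nat_add_iff 1).mp ((lp.memℓp z).summable h2)

theorem tsum_shiftSeq (z : lp (fun _ : ℕ => ℂ) 2) :
    ∑' n, ‖shiftSeq (⇑z) n‖ ^ (2 : ℝ≥0∞).toReal = ∑' n, ‖z n‖ ^ (2 : ℝ≥0∞).toReal := by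
  have h2 : (0 : ℝ) < (2 : ℝ≥0∞).toReal := by norm_num
  have hs : Summable fun n => ‖shiftSeq (⇑z) n‖ ^ (2 : ℝ≥0∞).toReal :=
    (summable_nat_add_iff 1).mp ((lp.memℓp z).summable h2)
  rw [Summable.tsum_eq_zero_add hs]
  simp only [shiftSeq, norm_zero]
  rw [Real.zero_rpow h2.ne', zero_add]

/-- The unilateral shift `S` on `ℓ²(ℕ, ℂ)`: `S(z₁, z₂, …) = (0, z₁, z₂, …)`. -/
noncomputable def shiftOp : lp (fun _ : ℕ => ℂ) 2 →L[ℂ] lp (fun _ : ℕ => ℂ) 2 :=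
  LinearMap.mkContinuous
    { toFun := fun z => (⟨shiftSeq ⇑z, memℓp_shiftSeq z⟩ : lp (fun _ : ℕ => ℂ) 2)
      map_add' := fun z w => Subtype.ext (funext fun n => by
        cases n with
        | zero => exact (add_zero 0).symm
        | succ k => rfl)
      map_smul' := fun c z => Subtype.ext (funext fun n => by
        cases n with
        | zero => exact (smul_zero c).symm
        | succ k => rfl) }
    1
    (fun z => by
      have h2 : (0 : ℝ) < (2 : ℝ≥0∞).toReal := by norm_num
      apply lp.norm_le_of_tsum_le h2 (by positivity)
      calc (∑' n, ‖shiftSeq (⇑z) n‖ ^ (2 : ℝ≥0∞).toReal)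
          = ∑' n, ‖z n‖ ^ (2 : ℝ≥0∞).toReal := tsum_shiftSeq z
        _ = ‖z‖ ^ (2 : ℝ≥0∞).toReal := (lp.norm_rpow_eq_tsum h2 z).symm
        _ = (1 * ‖z‖) ^ (2 : ℝ≥0∞).toReal := by rw [one_mul]
        _ ≤ (1 * ‖z‖) ^ (2 : ℝ≥0∞).toReal := le_rfl)

@[simp] theorem shiftOp_apply_zero (z : lp (fun _ : ℕ => ℂ) 2) : shiftOp z 0 = 0 := rfl

@[simp] theorem shiftOp_apply_succ (z : lp (fun _ : ℕ => ℂ) 2) (n : ℕ) :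
    shiftOp z (n + 1) = z n := rfl

end Shift

section Euclidean

/-- The diagonal operator on `ℂᵖ` (with the Euclidean norm) with diagonal entries `d j`. -/
noncomputable def eucDiag {p : ℕ} (d : Fin p → ℂ) :
    EuclideanSpace ℂ (Fin p) →L[ℂ] EuclideanSpace ℂ (Fin p) :=
  LinearMap.toContinuousLinearMap
    { toFun := fun z => (WithLp.toLp 2 (fun j => d j * z j) : EuclideanSpace ℂ (Fin p))
      map_add' := fun z w => congrArg (WithLp.toLp 2) <| funext fun j => by
        exact mul_add (d j) (z j) (w j)
      map_smul' := fun c z => congrArg (WithLp.toLp 2) <| funext fun j => by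
        exact mul_left_comm (d j) c (z j) }

/-- The λ-twisted cyclic shift on `ℂᵖ`: `(z₁, …, z_p) ↦ λ • (z_p, z₁, …, z_{p-1})`. -/
noncomputable def eucCyc (p : ℕ) (lam : ℂ) :
    EuclideanSpace ℂ (Fin p) →L[ℂ] EuclideanSpace ℂ (Fin p) :=
  LinearMap.toContinuousLinearMap
    { toFun := fun z => (WithLp.toLp 2 (fun j => lam * z ((finRotate p).symm j)) :
        EuclideanSpace ℂ (Fin p))
      map_add' := fun z w => congrArg (WithLp.toLp 2) <| funext fun j => by
        exact mul_add _ _ _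
      map_smul' := fun c z => congrArg (WithLp.toLp 2) <| funext fun j => by
        exact mul_left_comm _ _ _ }

end Euclidean


/-- The orbit representation `π_x(f)`: the diagonal operator on `ℓ²(ℕ, ℂ)` with entries
`f (φ^[n] x)`, i.e. `(π_x(f)z)ₙ = f(φ^{n-1}(x))·zₙ` in 1-indexed notation. -/
noncomputable def piOp {X : Type*} [TopologicalSpace X] [CompactSpace X]
    (φ : X → X) (x : X) (f : C(X, ℂ)) :
    lp (fun _ : ℕ => ℂ) 2 →L[ℂ] lp (fun _ : ℕ => ℂ) 2 :=
  diagOp (fun n : ℕ => f (φ^[n] x)) ‖f‖ (fun n => f.norm_coe_le_norm _)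


section Aux

@[simp] theorem eucDiag_apply {p : ℕ} (d : Fin p → ℂ) (z : EuclideanSpace ℂ (Fin p)) (j : Fin p) :
    eucDiag d z j = d j * z j := rfl

@[simp] theorem eucCyc_apply (p : ℕ) (lam : ℂ) (z : EuclideanSpace ℂ (Fin p)) (j : Fin p) :
    eucCyc p lam z j = lam * z ((finRotate p).symm j) := rfl

@[simp] theorem piOp_apply {X : Type*} [TopologicalSpace X] [CompactSpace X]
    (φ : X → X) (x : X) (f : C(X, ℂ)) (z : lp (fun _ : ℕ => ℂ) 2) (m : ℕ) :
    piOp φ x f z m = f (φ^[m] x) * z m := rfl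

theorem shiftOp_pow_apply (n : ℕ) (z : lp (fun _ : ℕ => ℂ) 2) (m : ℕ) :
    (shiftOp ^ n) z m = if n ≤ m then z (m - n) else 0 := by
  induction n generalizing z m with
  | zero => simp
  | succ n ih =>
    have h0 : (shiftOp ^ (n+1)) z = (shiftOp ^ n) (shiftOp z) := by
      rw [pow_succ]; rfl
    rw [h0, ih]
    rcases le_or_gt (n+1) m with h | h
    · rw [if_pos (show n ≤ m by omega), if_pos h,
        show m - n = (m - (n+1)) + 1 by omega]
      exact shiftOp_apply_succ z _
    · rw [if_neg (show ¬ (n+1) ≤ m by omega)]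
      rcases le_or_gt n m with h' | h'
      · rw [if_pos h', show m - n = 0 by omega]
        exact shiftOp_apply_zero z
      · rw [if_neg (show ¬ n ≤ m by omega)]

theorem eucCyc_pow_apply (p : ℕ) (lam : ℂ) (n : ℕ) (z : EuclideanSpace ℂ (Fin p)) (j : Fin p) :
    (eucCyc p lam ^ n) z j = lam ^ n * z ((Equiv.symm (finRotate p))^[n] j) := by
  induction n generalizing z j with
  | zero => simp
  | succ n ih =>
    have h0 : (eucCyc p lam ^ (n+1)) z = (eucCyc p lam ^ n) (eucCyc p lam z) := by
      rw [pow_succ]; rfl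
    rw [h0, ih, eucCyc_apply, Function.iterate_succ_apply']
    ring

theorem finRotate_symm_iter {p : ℕ} (hp : 0 < p) (n m : ℕ) (hnm : n ≤ m) :
    (Equiv.symm (finRotate p))^[n] ⟨m % p, Nat.mod_lt m hp⟩ =
      ⟨(m - n) % p, Nat.mod_lt _ hp⟩ := by
  obtain ⟨q, rfl⟩ := Nat.exists_eq_add_of_lt hp
  induction n with
  | zero => simp
  | succ n ih =>
    rw [Function.iterate_succ_apply', ih (by omega)]
    rw [Equiv.symm_apply_eq]
    apply Fin.ext
    rw [finRotate_succ_apply]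
    symm
    show ((m - (n+1)) % (0 + q + 1) + (1 : Fin (0+q+1)).val) % (0 + q + 1) = (m - n) % (0 + q + 1)
    rw [Fin.val_one', ← Nat.add_mod]
    congr 1
    omega

theorem iterate_mod_period {X : Type*} {φ : X → X} {y : X} {p : ℕ}
    (hy : φ^[p] y = y) (m : ℕ) : φ^[m] y = φ^[m % p] y := by
  conv_lhs => rw [← Nat.mod_add_div m p, Function.iterate_add_apply]
  congr 1
  rw [Function.iterate_mul]
  exact Function.iterate_fixed hy _

theorem lp2_norm_sq (z : lp (fun _ : ℕ => ℂ) 2) : ‖z‖ ^ 2 = ∑' m, ‖z m‖ ^ 2 := by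
  have h := lp.norm_rpow_eq_tsum (p := 2) (by norm_num) z
  have h2 : ((2:ℝ≥0∞)).toReal = ((2:ℕ):ℝ) := by norm_num
  rw [h2] at h
  simpa [Real.rpow_natCast] using h

theorem lp2_summable (z : lp (fun _ : ℕ => ℂ) 2) : Summable (fun m => ‖z m‖ ^ 2) := by
  have h := (lp.memℓp z).summable (p := 2) (by norm_num)
  have h2 : ((2:ℝ≥0∞)).toReal = ((2:ℕ):ℝ) := by norm_num
  rw [h2] at h
  exact h.congr (fun m => Real.rpow_natCast _ _)

theorem sum_sq_le_norm_sq (z : lp (fun _ : ℕ => ℂ) 2) (s : Finset ℕ) :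
    ∑ m ∈ s, ‖z m‖ ^ 2 ≤ ‖z‖ ^ 2 := by
  rw [lp2_norm_sq]
  exact Summable.sum_le_tsum s (fun m _ => by positivity) (lp2_summable z)

theorem sum_Ico_mod {p : ℕ} (hp : 0 < p) (g : Fin p → ℝ) (a t : ℕ) :
    ∑ m ∈ Finset.Ico (a*p) ((a+t)*p), g ⟨m % p, Nat.mod_lt m hp⟩
      = t * ∑ j, g j := by
  induction t with
  | zero => simp
  | succ t ih =>
    have hsplit : Finset.Ico (a*p) ((a+t)*p) ∪ Finset.Ico ((a+t)*p) ((a+t+1)*p)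
        = Finset.Ico (a*p) ((a+t+1)*p) :=
      Finset.Ico_union_Ico_eq_Ico (by nlinarith) (by nlinarith)
    have hd : Disjoint (Finset.Ico (a*p) ((a+t)*p)) (Finset.Ico ((a+t)*p) ((a+t+1)*p)) :=
      Finset.Ico_disjoint_Ico_consecutive _ _ _
    have hblock : ∑ m ∈ Finset.Ico ((a+t)*p) ((a+t+1)*p), g ⟨m % p, Nat.mod_lt m hp⟩
        = ∑ j, g j := by
      rw [Finset.sum_Ico_eq_sum_range]
      have hlen : (a+t+1)*p - (a+t)*p = p := by ring_nf; omega
      rw [hlen, ← Fin.sum_univ_eq_sum_range (fun i => g ⟨((a+t)*p + i) % p, Nat.mod_lt _ hp⟩)]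
      apply Finset.sum_congr rfl
      intro j _
      congr 1
      apply Fin.ext
      show ((a+t)*p + (j:ℕ)) % p = (j:ℕ)
      rw [Nat.add_mod, Nat.mul_mod_left]
      simp [Nat.mod_eq_of_lt j.isLt]
    have hu := Finset.sum_union hd (f := fun m => g ⟨m % p, Nat.mod_lt m hp⟩)
    rw [hsplit] at hu
    have ha : a + (t+1) = (a + t) + 1 := by omega
    rw [ha, hu, ih, hblock]
    push_cast
    ring

theorem euc_norm_sq {p : ℕ} (v : EuclideanSpace ℂ (Fin p)) : ‖v‖ ^ 2 = ∑ j, ‖v j‖ ^ 2 := by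
  rw [EuclideanSpace.norm_eq, Real.sq_sqrt]
  positivity

theorem euc_sum_apply {p : ℕ} {ι : Type*} (s : Finset ι) (x : ι → EuclideanSpace ℂ (Fin p))
    (j : Fin p) : (∑ i ∈ s, x i) j = ∑ i ∈ s, x i j := by
  induction s using Finset.cons_induction with
  | empty => rfl
  | cons a s ha ih => rw [Finset.sum_cons, Finset.sum_cons, ← ih]; rfl

theorem sq_nonneg_le {a b : ℝ} (ha : 0 ≤ a) (hb : 0 ≤ b) (h : a ^ 2 ≤ b ^ 2) : a ≤ b :=
  (pow_le_pow_iff_left₀ ha hb (by norm_num)).mp h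

theorem conj_mul_self_one {lam : ℂ} (hlam : ‖lam‖ = 1) : (starRingEnd ℂ) lam * lam = 1 := by
  rw [mul_comm, Complex.mul_conj]
  norm_cast
  rw [Complex.normSq_eq_norm_sq, hlam]
  norm_num

/-- The finitely supported test vector: `k` twisted copies of `v` along the orbit. -/
noncomputable def testVec (p k : ℕ) (hp : 0 < p) (lam : ℂ) (v : EuclideanSpace ℂ (Fin p)) :
    lp (fun _ : ℕ => ℂ) 2 :=
  ⟨fun m => if m < k * p then (starRingEnd ℂ) lam ^ m * v ⟨m % p, Nat.mod_lt m hp⟩ else 0, by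
    apply memℓp_gen
    apply summable_of_ne_finset_zero (s := Finset.range (k*p))
    intro m hm
    rw [Finset.mem_range, not_lt] at hm
    rw [if_neg (not_lt.mpr hm), norm_zero,
      Real.zero_rpow (by norm_num : ((2:ℝ≥0∞)).toReal ≠ 0)]⟩

@[simp] theorem testVec_apply (p k : ℕ) (hp : 0 < p) (lam : ℂ) (v : EuclideanSpace ℂ (Fin p))
    (m : ℕ) : testVec p k hp lam v m
      = if m < k * p then (starRingEnd ℂ) lam ^ m * v ⟨m % p, Nat.mod_lt m hp⟩ else 0 := rfl

end Aux

/-- For `φ` a homeomorphism of a nonempty compact Hausdorff space `X`,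
`y ∈ X` periodic with `φᵖ(y) = y` (`p ≥ 1`), `λ ∈ 𝕋` and `f₀, …, f_N ∈ C(X, ℂ)`:
`‖Σₙ Sⁿ π_y(fₙ)‖ ≥ ‖Σₙ Π_{y,λ}(U)ⁿ Π_{y,λ}(fₙ)‖`. -/
theorem norm_periodic_rep_le_norm_orbit_rep
    {X : Type*} [TopologicalSpace X] [CompactSpace X] [T2Space X] [Nonempty X]
    (φ : X ≃ₜ X) (y : X) (p : ℕ) (hp : 1 ≤ p) (hy : (⇑φ)^[p] y = y)
    (lam : ℂ) (hlam : ‖lam‖ = 1) (N : ℕ) (f : ℕ → C(X, ℂ)) :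
    ‖∑ n ∈ Finset.range (N + 1),
        (eucCyc p lam ^ n).comp (eucDiag (fun j : Fin p => f n ((⇑φ)^[(j : ℕ)] y)))‖ ≤
    ‖∑ n ∈ Finset.range (N + 1), (shiftOp ^ n).comp (piOp ⇑φ y (f n))‖ := by
  have hp0 : 0 < p := hp
  set A := ∑ n ∈ Finset.range (N + 1), (shiftOp ^ n).comp (piOp ⇑φ y (f n)) with hA
  set B := ∑ n ∈ Finset.range (N + 1),
      (eucCyc p lam ^ n).comp (eucDiag (fun j : Fin p => f n ((⇑φ)^[(j : ℕ)] y))) with hB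
  apply ContinuousLinearMap.opNorm_le_bound _ (norm_nonneg A)
  intro v
  have hconj : (starRingEnd ℂ) lam * lam = 1 := conj_mul_self_one hlam
  have hnconj : ‖(starRingEnd ℂ) lam‖ = 1 := by rw [RCLike.norm_conj, hlam]
  -- coordinates of B v
  have hBv : ∀ m : ℕ, N ≤ m → (B v) ⟨m % p, Nat.mod_lt m hp0⟩
      = ∑ n ∈ Finset.range (N+1),
          lam ^ n * (f n ((⇑φ)^[(m - n) % p] y) * v ⟨(m-n) % p, Nat.mod_lt _ hp0⟩) := by
    intro m hm
    rw [hB, ContinuousLinearMap.sum_apply, euc_sum_apply]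
    apply Finset.sum_congr rfl
    intro n hn
    have hnm : n ≤ m := le_trans (Nat.lt_succ_iff.mp (Finset.mem_range.mp hn)) hm
    rw [ContinuousLinearMap.comp_apply, eucCyc_pow_apply, finRotate_symm_iter hp0 n m hnm,
      eucDiag_apply]
  -- norm of the test vector
  have hw_normsq : ∀ k : ℕ, ‖testVec p k hp0 lam v‖^2 = k * ‖v‖^2 := by
    intro k
    rw [lp2_norm_sq]
    rw [tsum_eq_sum (s := Finset.range (k*p)) (f := fun m => ‖testVec p k hp0 lam v m‖^2)
      (fun m hm => by
        rw [Finset.mem_range, not_lt] at hm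
        show ‖testVec p k hp0 lam v m‖^2 = 0
        rw [testVec_apply, if_neg (not_lt.mpr hm), norm_zero]
        norm_num)]
    have hcong : ∀ m ∈ Finset.Ico (0*p) ((0+k)*p),
        ‖testVec p k hp0 lam v m‖^2 = ‖v ⟨m % p, Nat.mod_lt m hp0⟩‖^2 := by
      intro m hm
      rw [Finset.mem_Ico] at hm
      have hmk : m < k * p := by simpa using hm.2
      rw [testVec_apply, if_pos hmk, norm_mul, norm_pow, hnconj, one_pow, one_mul]
    rw [show Finset.range (k*p) = Finset.Ico (0*p) ((0+k)*p) by
        rw [Nat.zero_mul, Nat.zero_add, Finset.range_eq_Ico]]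
    rw [Finset.sum_congr rfl hcong, sum_Ico_mod hp0 (fun j => ‖v j‖^2) 0 k, ← euc_norm_sq]
  -- the key coordinatewise identity
  have hkey : ∀ k m : ℕ, N*p ≤ m → m < k*p →
      ‖(A (testVec p k hp0 lam v)) m‖ = ‖(B v) ⟨m % p, Nat.mod_lt m hp0⟩‖ := by
    intro k m hm1 hm2
    have hNm : N ≤ m := le_trans (Nat.le_mul_of_pos_right N hp0) hm1
    have hAv : (A (testVec p k hp0 lam v)) m
        = (starRingEnd ℂ) lam ^ m * (B v) ⟨m % p, Nat.mod_lt m hp0⟩ := by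
      rw [hA, ContinuousLinearMap.sum_apply, lp.coeFn_sum, Finset.sum_apply, hBv m hNm,
        Finset.mul_sum]
      apply Finset.sum_congr rfl
      intro n hn
      have hnm : n ≤ m := le_trans (Nat.lt_succ_iff.mp (Finset.mem_range.mp hn)) hNm
      rw [ContinuousLinearMap.comp_apply, shiftOp_pow_apply, if_pos hnm, piOp_apply,
        testVec_apply, if_pos (show m - n < k*p by omega),
        iterate_mod_period hy (m - n)]
      have hsplit : (starRingEnd ℂ) lam ^ (m-n) = (starRingEnd ℂ) lam ^ m * lam ^ n := by
        have h1 : (starRingEnd ℂ) lam ^ m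
            = (starRingEnd ℂ) lam ^ (m-n) * (starRingEnd ℂ) lam ^ n := by
          rw [← pow_add]; congr 1; omega
        rw [h1, mul_assoc, ← mul_pow, hconj, one_pow, mul_one]
      rw [hsplit]; ring
    rw [hAv, norm_mul, norm_pow, hnconj, one_pow, one_mul]
  -- the quantitative estimate for each t
  have main : ∀ t : ℕ, (t:ℝ) * ‖B v‖^2 ≤ ((N + t : ℕ):ℝ) * (‖A‖^2 * ‖v‖^2) := by
    intro t
    set k := N + t with hk
    set w := testVec p k hp0 lam v with hwdef
    have h1 : ∑ m ∈ Finset.Ico (N*p) ((N+t)*p), ‖(A w) m‖^2 = (t:ℝ) * ‖B v‖^2 := by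
      have hc : ∀ m ∈ Finset.Ico (N*p) ((N+t)*p),
          ‖(A w) m‖^2 = ‖(B v) ⟨m % p, Nat.mod_lt m hp0⟩‖^2 := by
        intro m hm
        rw [Finset.mem_Ico] at hm
        rw [hkey k m hm.1 hm.2]
      rw [Finset.sum_congr rfl hc, sum_Ico_mod hp0 (fun j => ‖(B v) j‖^2) N t, ← euc_norm_sq]
    calc (t:ℝ) * ‖B v‖^2 = ∑ m ∈ Finset.Ico (N*p) ((N+t)*p), ‖(A w) m‖^2 := h1.symm
      _ ≤ ‖A w‖^2 := sum_sq_le_norm_sq (A w) _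
      _ ≤ (‖A‖ * ‖w‖)^2 := pow_le_pow_left₀ (norm_nonneg _) (A.le_opNorm w) 2
      _ = ‖A‖^2 * ‖w‖^2 := by ring
      _ = ‖A‖^2 * ((k:ℝ) * ‖v‖^2) := by rw [hw_normsq k]
      _ = ((N + t : ℕ):ℝ) * (‖A‖^2 * ‖v‖^2) := by rw [hk]; ring
  -- pass to the limit
  have hle : ‖B v‖^2 ≤ ‖A‖^2 * ‖v‖^2 := by
    by_contra hcon
    push_neg at hcon
    set X := ‖B v‖^2 with hX
    set Y := ‖A‖^2 * ‖v‖^2 with hY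
    have hXY : 0 < X - Y := by linarith
    obtain ⟨t, ht⟩ := exists_nat_gt ((N:ℝ) * Y / (X - Y))
    have h := main t
    push_cast at h
    have h2 : (N:ℝ) * Y < t * (X - Y) := by rwa [div_lt_iff₀ hXY] at ht
    have h3 : (t:ℝ) * (X - Y) = t * X - t * Y := by ring
    linarith
  apply sq_nonneg_le (norm_nonneg _) (by positivity)
  calc ‖B v‖^2 ≤ ‖A‖^2 * ‖v‖^2 := hle
    _ = (‖A‖ * ‖v‖)^2 := by ring
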